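/- arXiv:0708.0563 — 2 statements merged into one kernel-verified Lean document; each statement's English description precedes it below -/
import Mathlib

section
/- For every integer n ≥ 1, every real q > 0, and all real θ, φ, with x = cos θ and y = cos φ, one has e^{-inφ} · (-q^{(1-n)/2} e^{i(θ+φ)}, -q^{(1-n)/2} e^{i(-θ+φ)}; q)_n = 2^n · ∏_{j=1}^{k} t_{2j-1}(x,y,q) if n = 2k, and = 2^n · ∏_{j=0}^{k} t_{2j}(x,y,q) if n = 2k+1. -/
/-- The `q`-Pochhammer symbol `(a;q)_n` with complex `a` and real `q`. -/
noncomputable def qPochC (a : ℂ) (q : ℝ) (n : ℕ) : ℂ := ∏ i ∈ Finset.range n, (1 - a * (q : ℂ) ^ i)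

/-- `t_n(x,y,q)`: `t_0 = x + y` and for `n ≥ 1`,
`t_n = x² + y² + xy(q^{n/2} + q^{-n/2}) + (q^n + q^{-n} - 2)/4`. -/
noncomputable def tfun (q x y : ℝ) (n : ℕ) : ℝ :=
  if n = 0 then x + y
  else x ^ 2 + y ^ 2 + x * y * (q ^ ((n : ℝ) / 2) + q ^ (-(n : ℝ) / 2))
    + (q ^ (n : ℝ) + q ^ (-(n : ℝ)) - 2) / 4

noncomputable def Pc (q θ φ r : ℝ) : ℂ :=
  ((2 * Real.cos φ : ℝ) : ℂ) + ((q ^ r : ℝ) : ℂ) * Complex.exp (Complex.I * θ)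
    + ((q ^ (-r) : ℝ) : ℂ) * Complex.exp (-(Complex.I * θ))

lemma exp_sum_cos (t : ℝ) :
    Complex.exp (Complex.I * t) + Complex.exp (-(Complex.I * t)) = ((2 * Real.cos t : ℝ) : ℂ) := by
  rw [mul_comm Complex.I, ← neg_mul, Complex.exp_mul_I, Complex.exp_mul_I]
  push_cast
  simp only [Complex.cos_neg, Complex.sin_neg]
  ring

lemma exp_inv (t : ℝ) : Complex.exp (Complex.I * t) * Complex.exp (-(Complex.I * t)) = 1 := by
  rw [← Complex.exp_add]; simp

lemma rpow_inv_c (q : ℝ) (hq : 0 < q) (r : ℝ) :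
    ((q ^ r : ℝ) : ℂ) * ((q ^ (-r) : ℝ) : ℂ) = 1 := by
  rw [← Complex.ofReal_mul, ← Real.rpow_add hq]
  simp

lemma factor (q : ℝ) (hq : 0 < q) (θ φ r : ℝ) :
    Complex.exp (-(Complex.I * φ)) *
      ((1 + ((q ^ r : ℝ) : ℂ) * Complex.exp (Complex.I * ((θ + φ : ℝ) : ℂ))) *
       (1 + ((q ^ (-r) : ℝ) : ℂ) * Complex.exp (Complex.I * ((-θ + φ : ℝ) : ℂ)))) = Pc q θ φ r := by
  have h1 : Complex.exp (Complex.I * ((θ + φ : ℝ) : ℂ))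
      = Complex.exp (Complex.I * θ) * Complex.exp (Complex.I * φ) := by
    rw [← Complex.exp_add]; push_cast; ring_nf
  have h2 : Complex.exp (Complex.I * ((-θ + φ : ℝ) : ℂ))
      = Complex.exp (-(Complex.I * θ)) * Complex.exp (Complex.I * φ) := by
    rw [← Complex.exp_add]; push_cast; ring_nf
  rw [h1, h2, Pc]
  set E := Complex.exp (Complex.I * (θ : ℂ))
  set H := Complex.exp (-(Complex.I * (θ : ℂ)))
  set F := Complex.exp (Complex.I * (φ : ℂ))
  set G := Complex.exp (-(Complex.I * (φ : ℂ)))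
  set u := ((q ^ r : ℝ) : ℂ)
  set v := ((q ^ (-r) : ℝ) : ℂ)
  have hFG : F * G = 1 := exp_inv φ
  have hEH : E * H = 1 := exp_inv θ
  have huv : u * v = 1 := rpow_inv_c q hq r
  have hsum : F + G = ((2 * Real.cos φ : ℝ) : ℂ) := exp_sum_cos φ
  linear_combination hsum + (u * E + v * H + u * v * E * H * F) * hFG + (F * E * H) * huv + F * hEH

lemma pair (q : ℝ) (hq : 0 < q) (θ φ r : ℝ) :
    Pc q θ φ r * Pc q θ φ (-r) =
    ((4 * ((Real.cos θ) ^ 2 + (Real.cos φ) ^ 2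
      + Real.cos θ * Real.cos φ * (q ^ r + q ^ (-r))
      + (q ^ (2 * r) + q ^ (-(2 * r)) - 2) / 4) : ℝ) : ℂ) := by
  rw [Pc, Pc, neg_neg]
  set E := Complex.exp (Complex.I * (θ : ℂ))
  set H := Complex.exp (-(Complex.I * (θ : ℂ)))
  set u := ((q ^ r : ℝ) : ℂ)
  set v := ((q ^ (-r) : ℝ) : ℂ)
  have hEH : E * H = 1 := exp_inv θ
  have huv : u * v = 1 := rpow_inv_c q hq r
  have hu2 : ((q ^ (2 * r) : ℝ) : ℂ) = u ^ 2 := by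
    rw [show (2:ℝ) * r = r + r by ring, Real.rpow_add hq]; push_cast; ring
  have hv2 : ((q ^ (-(2 * r)) : ℝ) : ℂ) = v ^ 2 := by
    rw [show -((2:ℝ) * r) = -r + -r by ring, Real.rpow_add hq]; push_cast; ring
  have hsum : E + H = ((2 * Real.cos θ : ℝ) : ℂ) := exp_sum_cos θ
  push_cast at hsum hu2 hv2 ⊢
  linear_combination (2 * Complex.cos (φ:ℂ) * (u + v) + u * v * (E + H + 2 * Complex.cos (θ:ℂ))) * hsum
    + (u ^ 2 + v ^ 2 - 2 * u * v) * hEH + (4 * Complex.cos (θ:ℂ) ^ 2 - 2) * huv - hu2 - hv2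

lemma pc_zero (q : ℝ) (hq : 0 < q) (θ φ : ℝ) :
    Pc q θ φ 0 = ((2 * (Real.cos θ + Real.cos φ) : ℝ) : ℂ) := by
  rw [Pc, neg_zero, Real.rpow_zero]
  have h := exp_sum_cos θ
  push_cast at h ⊢
  linear_combination h

lemma pairt (q : ℝ) (hq : 0 < q) (θ φ : ℝ) (m : ℕ) (hm : m ≠ 0) :
    Pc q θ φ ((m : ℝ) / 2) * Pc q θ φ (-((m : ℝ) / 2))
      = ((4 * tfun q (Real.cos θ) (Real.cos φ) m : ℝ) : ℂ) := by
  rw [pair q hq θ φ ((m : ℝ) / 2), tfun, if_neg hm]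
  have e1 : (2:ℝ) * ((m:ℝ)/2) = (m:ℝ) := by ring
  have e3 : -((m:ℝ)/2) = -(m:ℝ)/2 := by ring
  rw [e1, e3]

lemma master (q : ℝ) (hq : 0 < q) (θ φ : ℝ) (n : ℕ) :
    Complex.exp (-(n : ℂ) * Complex.I * (φ : ℂ)) *
      qPochC (-((q ^ ((1 - (n : ℝ)) / 2) : ℝ) : ℂ) * Complex.exp (Complex.I * ((θ + φ : ℝ) : ℂ))) q n *
      qPochC (-((q ^ ((1 - (n : ℝ)) / 2) : ℝ) : ℂ) * Complex.exp (Complex.I * ((-θ + φ : ℝ) : ℂ))) q n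
    = ∏ i ∈ Finset.range n, Pc q θ φ ((1 - (n : ℝ)) / 2 + i) := by
  set s : ℝ := (1 - (n : ℝ)) / 2 with hs
  have hexp : Complex.exp (-(n : ℂ) * Complex.I * (φ : ℂ))
      = ∏ _i ∈ Finset.range n, Complex.exp (-(Complex.I * (φ : ℂ))) := by
    rw [Finset.prod_const, ← Complex.exp_nat_mul]
    congr 1
    push_cast [Finset.card_range]
    ring
  rw [qPochC, qPochC, ← Finset.prod_range_reflect (fun i => 1 -
      (-((q ^ s : ℝ) : ℂ) * Complex.exp (Complex.I * ((-θ + φ : ℝ) : ℂ))) * (q:ℂ) ^ i) n,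
    hexp, ← Finset.prod_mul_distrib, ← Finset.prod_mul_distrib]
  refine Finset.prod_congr rfl fun i hi => ?_
  rw [Finset.mem_range] at hi
  have hcast : ∀ j : ℕ, ((q ^ s : ℝ) : ℂ) * (q : ℂ) ^ j = ((q ^ (s + j) : ℝ) : ℂ) := by
    intro j
    rw [Real.rpow_add hq, Real.rpow_natCast]
    push_cast
    ring
  have h1 : (1 : ℂ) - -((q ^ s : ℝ) : ℂ) * Complex.exp (Complex.I * ((θ + φ : ℝ) : ℂ)) * (q:ℂ) ^ i
      = 1 + ((q ^ (s + i) : ℝ) : ℂ) * Complex.exp (Complex.I * ((θ + φ : ℝ) : ℂ)) := by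
    rw [← hcast]; ring
  have hni : ((n - 1 - i : ℕ) : ℝ) = (n : ℝ) - 1 - i := by
    have : i ≤ n - 1 := by omega
    push_cast [Nat.cast_sub (by omega : 1 ≤ n), Nat.cast_sub this]
    ring
  have h2 : (1 : ℂ) - -((q ^ s : ℝ) : ℂ) * Complex.exp (Complex.I * ((-θ + φ : ℝ) : ℂ)) * (q:ℂ) ^ (n - 1 - i)
      = 1 + ((q ^ (-(s + i)) : ℝ) : ℂ) * Complex.exp (Complex.I * ((-θ + φ : ℝ) : ℂ)) := by
    have he : -(s + (i:ℝ)) = s + ((n - 1 - i : ℕ) : ℝ) := by rw [hni, hs]; ring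
    rw [he, ← hcast]
    ring

  rw [h1, h2, ← factor q hq θ φ (s + i)]
  ring

theorem stmt1 (n : ℕ) (hn : 1 ≤ n) (q : ℝ) (hq0 : 0 < q) (θ φ x y : ℝ)
    (hx : x = Real.cos θ) (hy : y = Real.cos φ) :
    (∀ k : ℕ, n = 2 * k →
      Complex.exp (-(n : ℂ) * Complex.I * (φ : ℂ)) *
        qPochC (-((q ^ ((1 - (n : ℝ)) / 2) : ℝ) : ℂ) * Complex.exp (Complex.I * ((θ + φ : ℝ) : ℂ))) q n *
        qPochC (-((q ^ ((1 - (n : ℝ)) / 2) : ℝ) : ℂ) * Complex.exp (Complex.I * ((-θ + φ : ℝ) : ℂ))) q n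
      = 2 ^ n * ((∏ j ∈ Finset.Icc 1 k, tfun q x y (2 * j - 1) : ℝ) : ℂ)) ∧
    (∀ k : ℕ, n = 2 * k + 1 →
      Complex.exp (-(n : ℂ) * Complex.I * (φ : ℂ)) *
        qPochC (-((q ^ ((1 - (n : ℝ)) / 2) : ℝ) : ℂ) * Complex.exp (Complex.I * ((θ + φ : ℝ) : ℂ))) q n *
        qPochC (-((q ^ ((1 - (n : ℝ)) / 2) : ℝ) : ℂ) * Complex.exp (Complex.I * ((-θ + φ : ℝ) : ℂ))) q n
      = 2 ^ n * ((∏ j ∈ Finset.range (k + 1), tfun q x y (2 * j) : ℝ) : ℂ)) := by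
  subst hx hy
  constructor
  · -- even case  n = 2k
    rintro k rfl
    rw [master q hq0 θ φ (2 * k)]
    set s : ℝ := (1 - ((2 * k : ℕ) : ℝ)) / 2 with hs
    have hsval : s = (1 - 2 * (k : ℝ)) / 2 := by rw [hs]; push_cast; ring
    have hsplit : ∏ i ∈ Finset.range (2 * k), Pc q θ φ (s + i)
        = (∏ i ∈ Finset.range k, Pc q θ φ (s + i)) *
          ∏ i ∈ Finset.range k, Pc q θ φ (s + ((k + i : ℕ) : ℝ)) := by
      rw [two_mul, Finset.prod_range_add]
    rw [hsplit, ← Finset.prod_range_reflect (fun i => Pc q θ φ (s + i)) k,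
      ← Finset.prod_mul_distrib]
    have hterm : ∀ i ∈ Finset.range k,
        Pc q θ φ (s + ((k - 1 - i : ℕ) : ℝ)) * Pc q θ φ (s + ((k + i : ℕ) : ℝ))
        = ((4 * tfun q (Real.cos θ) (Real.cos φ) (2 * (i + 1) - 1) : ℝ) : ℂ) := by
      intro i hi
      rw [Finset.mem_range] at hi
      have hc1 : ((k - 1 - i : ℕ) : ℝ) = (k : ℝ) - 1 - i := by
        push_cast [Nat.cast_sub (by omega : 1 ≤ k), Nat.cast_sub (by omega : i ≤ k - 1)]
        ring
      have hm : (2 * (i + 1) - 1 : ℕ) = 2 * i + 1 := by omega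
      have e1 : s + ((k - 1 - i : ℕ) : ℝ) = -((((2 * i + 1 : ℕ) : ℝ)) / 2) := by
        rw [hc1, hsval]; push_cast; ring
      have e2 : s + ((k + i : ℕ) : ℝ) = (((2 * i + 1 : ℕ) : ℝ)) / 2 := by
        rw [hsval]; push_cast; ring
      rw [e1, e2, hm, mul_comm]
      exact pairt q hq0 θ φ (2 * i + 1) (by omega)
    rw [Finset.prod_congr rfl hterm]
    have hIcc : ∏ j ∈ Finset.Icc 1 k, tfun q (Real.cos θ) (Real.cos φ) (2 * j - 1)
        = ∏ i ∈ Finset.range k, tfun q (Real.cos θ) (Real.cos φ) (2 * (i + 1) - 1) := by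
      rw [← Finset.Ico_add_one_right_eq_Icc, Finset.prod_Ico_eq_prod_range]
      norm_num
      exact Finset.prod_congr rfl fun i _ => by rw [show 1 + i = i + 1 by ring]
    rw [hIcc]
    push_cast
    rw [Finset.prod_mul_distrib, Finset.prod_const]
    push_cast
    rw [Finset.card_range, pow_mul]
    norm_num
  · -- odd case  n = 2k + 1
    rintro k rfl
    rw [master q hq0 θ φ (2 * k + 1)]
    set s : ℝ := (1 - ((2 * k + 1 : ℕ) : ℝ)) / 2 with hs
    have hsval : s = -(k : ℝ) := by rw [hs]; push_cast; ring
    have hsplit : ∏ i ∈ Finset.range (2 * k + 1), Pc q θ φ (s + i)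
        = (∏ i ∈ Finset.range k, Pc q θ φ (s + i)) *
          ((∏ i ∈ Finset.range k, Pc q θ φ (s + ((k + (i + 1) : ℕ) : ℝ))) *
            Pc q θ φ (s + ((k + 0 : ℕ) : ℝ))) := by
      rw [show 2 * k + 1 = k + (k + 1) by ring, Finset.prod_range_add,
        Finset.prod_range_succ' (fun i => Pc q θ φ (s + ((k + i : ℕ) : ℝ))) k]
    rw [hsplit]
    have hmid : Pc q θ φ (s + ((k + 0 : ℕ) : ℝ)) = ((2 * (Real.cos θ + Real.cos φ) : ℝ) : ℂ) := by
      have : s + ((k + 0 : ℕ) : ℝ) = 0 := by rw [hsval]; push_cast; ring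
      rw [this, pc_zero q hq0]
    rw [hmid, ← Finset.prod_range_reflect (fun i => Pc q θ φ (s + i)) k]
    have hterm : ∀ i ∈ Finset.range k,
        Pc q θ φ (s + ((k - 1 - i : ℕ) : ℝ)) * Pc q θ φ (s + ((k + (i + 1) : ℕ) : ℝ))
        = ((4 * tfun q (Real.cos θ) (Real.cos φ) (2 * (i + 1)) : ℝ) : ℂ) := by
      intro i hi
      rw [Finset.mem_range] at hi
      have hc1 : ((k - 1 - i : ℕ) : ℝ) = (k : ℝ) - 1 - i := by
        push_cast [Nat.cast_sub (by omega : 1 ≤ k), Nat.cast_sub (by omega : i ≤ k - 1)]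
        ring
      have e1 : s + ((k - 1 - i : ℕ) : ℝ) = -((((2 * (i + 1) : ℕ) : ℝ)) / 2) := by
        rw [hc1, hsval]; push_cast; ring
      have e2 : s + ((k + (i + 1) : ℕ) : ℝ) = (((2 * (i + 1) : ℕ) : ℝ)) / 2 := by
        rw [hsval]; push_cast; ring
      rw [e1, e2, mul_comm]
      exact pairt q hq0 θ φ (2 * (i + 1)) (by omega)
    calc (∏ i ∈ Finset.range k, Pc q θ φ (s + ((k - 1 - i : ℕ) : ℝ))) *
          ((∏ i ∈ Finset.range k, Pc q θ φ (s + ((k + (i + 1) : ℕ) : ℝ))) *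
            ((2 * (Real.cos θ + Real.cos φ) : ℝ) : ℂ))
        = (∏ i ∈ Finset.range k,
            Pc q θ φ (s + ((k - 1 - i : ℕ) : ℝ)) * Pc q θ φ (s + ((k + (i + 1) : ℕ) : ℝ))) *
            ((2 * (Real.cos θ + Real.cos φ) : ℝ) : ℂ) := by
          rw [Finset.prod_mul_distrib]; ring
      _ = (∏ i ∈ Finset.range k,
            ((4 * tfun q (Real.cos θ) (Real.cos φ) (2 * (i + 1)) : ℝ) : ℂ)) *
            ((2 * (Real.cos θ + Real.cos φ) : ℝ) : ℂ) := by
          rw [Finset.prod_congr rfl hterm]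
      _ = 2 ^ (2 * k + 1) *
            ((∏ j ∈ Finset.range (k + 1), tfun q (Real.cos θ) (Real.cos φ) (2 * j) : ℝ) : ℂ) := by
          rw [Finset.prod_range_succ' (fun j => tfun q (Real.cos θ) (Real.cos φ) (2 * j)) k]
          have ht0 : tfun q (Real.cos θ) (Real.cos φ) (2 * 0) = Real.cos θ + Real.cos φ := by
            rw [tfun]; norm_num
          rw [ht0]
          push_cast
          rw [Finset.prod_mul_distrib, Finset.prod_const, Finset.card_range]
          push_cast
          rw [pow_succ, pow_mul]
          norm_num
          ring
end

section
/- For every integer n ≥ 0, every real q > 1, and every complex y, one has (q-1)^{n/2} · B_n(y|q) = i^n · q^{n(n-1)/2} · h_n(i·y·√(q-1)/2 | 1/q), where i is the imaginary unit. -/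
/-! Both sides satisfy the three-term recurrence
`u_{n+2} = -q^{n+1} y √(q-1) · u_{n+1} + q^n (q^{n+1} - 1) · u_n`
with `u_0 = 1` and `u_1 = -y √(q-1)`, so they agree. On the left this is the defining
recurrence of `B_n` scaled by `√(q-1)^n`, using `[n+1]_q (q - 1) = q^{n+1} - 1`; on the right
the factor `q^{n(n-1)/2}` absorbs the powers of `1/q` in the `q⁻¹`-Hermite recurrence, and
`i^2 = -1` turns `2x = i y √(q-1)` into `-y √(q-1)`. -/

/-- `[n]_q = 1 + q + ⋯ + q^{n-1}`. -/
def qInt (q : ℝ) (n : ℕ) : ℝ := ∑ i ∈ Finset.range n, q ^ i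

/-- The polynomials `B_n(y|q)` with complex argument:
`B_0 = 1`, `B_1 = -y`, `B_{n+2} = -q^{n+1}y·B_{n+1} + q^n·[n+1]_q·B_n`. -/
noncomputable def BqC (q : ℝ) (y : ℂ) : ℕ → ℂ
  | 0 => 1
  | 1 => -y
  | n + 2 => -(q : ℂ) ^ (n + 1) * y * BqC q y (n + 1)
      + (q : ℂ) ^ n * (qInt q (n + 1) : ℝ) * BqC q y n

/-- The continuous `q`-Hermite polynomials `h_n(x|q)` with complex argument:
`h_0 = 1`, `h_1 = 2x`, `h_{n+2} = 2x·h_{n+1} - (1-q^{n+1})·h_n`. -/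
noncomputable def chqC (q : ℝ) (x : ℂ) : ℕ → ℂ
  | 0 => 1
  | 1 => 2 * x
  | n + 2 => 2 * x * chqC q x (n + 1) - (1 - (q : ℂ) ^ (n + 1)) * chqC q x n

theorem eq_of_two_step_recurrence {α : Type*} (f : ℕ → α → α → α) {u v : ℕ → α}
    (h0 : u 0 = v 0) (h1 : u 1 = v 1)
    (hu : ∀ n, u (n + 2) = f n (u (n + 1)) (u n))
    (hv : ∀ n, v (n + 2) = f n (v (n + 1)) (v n))
    (n : ℕ) : u n = v n := by
  induction n using Nat.twoStepInduction with
  | zero => exact h0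
  | one => exact h1
  | more n ih0 ih1 => rw [hu, hv, ih0, ih1]

theorem rpow_natCast_div_two {a : ℝ} (ha : 0 ≤ a) (n : ℕ) :
    a ^ ((n : ℝ) / 2) = √a ^ n := by
  rw [Real.sqrt_eq_rpow, ← Real.rpow_natCast, ← Real.rpow_mul ha]
  ring_nf

theorem qInt_mul_sub_one (q : ℝ) (n : ℕ) : qInt q n * (q - 1) = q ^ n - 1 :=
  geom_sum_mul q n

/-- `s` stands for `√(q-1)`. -/
def scaledStep (q : ℝ) (y s : ℂ) (n : ℕ) (a b : ℂ) : ℂ :=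
  -(q : ℂ) ^ (n + 1) * y * s * a + (q : ℂ) ^ n * ((q : ℂ) ^ (n + 1) - 1) * b

theorem pow_mul_BqC_add_two (q : ℝ) (y : ℂ) {s : ℂ} (hs : s ^ 2 = (q : ℂ) - 1) (n : ℕ) :
    s ^ (n + 2) * BqC q y (n + 2)
      = scaledStep q y s n (s ^ (n + 1) * BqC q y (n + 1)) (s ^ n * BqC q y n) := by
  have hqInt : ((qInt q (n + 1) : ℝ) : ℂ) * ((q : ℂ) - 1) = (q : ℂ) ^ (n + 1) - 1 := by
    exact_mod_cast congrArg Complex.ofReal (qInt_mul_sub_one q (n + 1))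
  rw [BqC, scaledStep, ← hqInt, ← hs]
  ring

theorem I_pow_mul_chqC_inv_add_two {q : ℝ} (hq : q ≠ 0) {x y s : ℂ}
    (hx : 2 * x = Complex.I * y * s) (n : ℕ) :
    Complex.I ^ (n + 2) * (q : ℂ) ^ ((n + 2) * (n + 2 - 1) / 2) * chqC (1 / q) x (n + 2)
      = scaledStep q y s n
          (Complex.I ^ (n + 1) * (q : ℂ) ^ ((n + 1) * (n + 1 - 1) / 2) * chqC (1 / q) x (n + 1))
          (Complex.I ^ n * (q : ℂ) ^ (n * (n - 1) / 2) * chqC (1 / q) x n) := by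
  have hinv : (q : ℂ) ^ (n + 1) * ((1 / q : ℝ) : ℂ) ^ (n + 1) = 1 := by
    rw [← mul_pow, Complex.ofReal_div, Complex.ofReal_one, mul_one_div_cancel (mod_cast hq),
      one_pow]
  have htri : (n + 2) * (n + 2 - 1) / 2 = n * (n - 1) / 2 + n + (n + 1) := by
    rw [Nat.triangle_succ (n + 1), Nat.triangle_succ n]
  rw [chqC, scaledStep, htri, Nat.triangle_succ n, hx]
  linear_combination (Complex.I ^ n * (q : ℂ) ^ (n * (n - 1) / 2) * (q : ℂ) ^ (2 * n + 1)
      * (Complex.I * y * s * chqC (1 / q) x (n + 1)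
        - (1 - ((1 / q : ℝ) : ℂ) ^ (n + 1)) * chqC (1 / q) x n)) * Complex.I_sq
    - (Complex.I ^ n * (q : ℂ) ^ (n * (n - 1) / 2) * (q : ℂ) ^ n * chqC (1 / q) x n) * hinv

theorem stmt6 (n : ℕ) (q : ℝ) (hq1 : 1 < q) (y : ℂ) :
    (((q - 1) ^ ((n : ℝ) / 2) : ℝ) : ℂ) * BqC q y n
      = Complex.I ^ n * (q : ℂ) ^ (n * (n - 1) / 2) *
        chqC (1 / q) (Complex.I * y * (Real.sqrt (q - 1) : ℂ) / 2) n := by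
  set s : ℂ := (Real.sqrt (q - 1) : ℂ)
  have hs : s ^ 2 = (q : ℂ) - 1 := by
    rw [← Complex.ofReal_pow, Real.sq_sqrt (by linarith), Complex.ofReal_sub, Complex.ofReal_one]
  rw [rpow_natCast_div_two (by linarith : (0 : ℝ) ≤ q - 1), Complex.ofReal_pow]
  refine eq_of_two_step_recurrence (scaledStep q y s) (u := fun m ↦ s ^ m * BqC q y m)
    (v := fun m ↦ Complex.I ^ m * (q : ℂ) ^ (m * (m - 1) / 2) *
      chqC (1 / q) (Complex.I * y * s / 2) m)
    ?_ ?_ (pow_mul_BqC_add_two q y hs)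
    (I_pow_mul_chqC_inv_add_two (by linarith) (by ring)) n
  · simp [BqC, chqC]
  · simp only [BqC, chqC]
    linear_combination (-y * s) * Complex.I_sq
end
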